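/- For the Taub-Bolt metric with b(r)² = 4(r+n)(r+3n) and c(r)² = 16n²·r(r+3n/2)/((r+n)(r+3n)) (n > 0), one has: (i) db²/dr > 0 and dc²/dr > 0 for all r > 0; (ii) c(r)/b(r) ≤ 1 for all r > 0; (iii) c(r)/b(r) → 0 as r → 0⁺ and c(r)/b(r) → 0 as r → ∞. -/

import Mathlib

/-! With `D = (r+n)(r+3n)` one has `b² = 4D` and `c² = 16n²r(r + 3n/2)/D`, so
`(c²)' = 8n³(5r² + 12nr + 9n²)/D²`, and `c ≤ b` amounts to the polynomial inequality
`4n²r(r + 3n/2) ≤ D²`. The ratio `c/b` is continuous at `r = 0`, where it vanishes, and it is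
at most `4n/(2r)` since `c ≤ 4n` and `b ≥ 2r`. -/

open Filter Topology

namespace TaubBolt

def bSq (n r : ℝ) : ℝ := 4 * (r + n) * (r + 3 * n)

noncomputable def cSq (n r : ℝ) : ℝ :=
  16 * n ^ 2 * (r * (r + 3 * n / 2)) / ((r + n) * (r + 3 * n))

/-- The squashing `u = c/b` of the Taub-Bolt metric. -/
noncomputable def squashing (n r : ℝ) : ℝ := √(cSq n r) / √(bSq n r)

variable {n r : ℝ}

theorem hasDerivAt_bSq (n r : ℝ) : HasDerivAt (bSq n) (8 * r + 16 * n) r := by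
  have h := (((hasDerivAt_id' r).add_const n).const_mul 4).mul
    ((hasDerivAt_id' r).add_const (3 * n))
  exact h.congr_deriv (by ring)

theorem hasDerivAt_cSq (hD : (r + n) * (r + 3 * n) ≠ 0) :
    HasDerivAt (cSq n)
      (8 * n ^ 3 * (5 * r ^ 2 + 12 * n * r + 9 * n ^ 2) / ((r + n) * (r + 3 * n)) ^ 2) r := by
  have hnum : HasDerivAt (fun r => 16 * n ^ 2 * (r * (r + 3 * n / 2)))
      (16 * n ^ 2 * (1 * (r + 3 * n / 2) + r * 1)) r :=
    ((hasDerivAt_id' r).mul ((hasDerivAt_id' r).add_const _)).const_mul _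
  have hden : HasDerivAt (fun r => (r + n) * (r + 3 * n)) (1 * (r + 3 * n) + (r + n) * 1) r :=
    ((hasDerivAt_id' r).add_const _).mul ((hasDerivAt_id' r).add_const _)
  refine (hnum.div hden hD).congr_deriv ?_
  field_simp
  ring

theorem deriv_bSq_pos (hn : 0 < n) (hr : 0 ≤ r) : 0 < deriv (bSq n) r := by
  rw [(hasDerivAt_bSq n r).deriv]
  positivity

theorem deriv_cSq_pos (hn : 0 < n) (hr : 0 ≤ r) : 0 < deriv (cSq n) r := by
  rw [(hasDerivAt_cSq (by positivity)).deriv]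
  positivity

theorem bSq_pos (hn : 0 < n) (hr : 0 ≤ r) : 0 < bSq n r := by
  unfold bSq
  positivity

theorem cSq_le_bSq (hn : 0 < n) (hr : 0 ≤ r) : cSq n r ≤ bSq n r := by
  rw [cSq, div_le_iff₀ (by positivity), bSq]
  linarith [show 0 ≤ r ^ 4 + 8 * n * r ^ 3 + 18 * n ^ 2 * r ^ 2 + 18 * n ^ 3 * r + 9 * n ^ 4 by
    positivity]

theorem cSq_le_sq (hn : 0 < n) (hr : 0 ≤ r) : cSq n r ≤ (4 * n) ^ 2 := by
  rw [cSq, div_le_iff₀ (by positivity)]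
  nlinarith [mul_nonneg (pow_nonneg hn.le 3) hr, pow_nonneg hn.le 4]

theorem sq_le_bSq (hn : 0 ≤ n) (hr : 0 ≤ r) : (2 * r) ^ 2 ≤ bSq n r := by
  rw [bSq]
  nlinarith [mul_nonneg hn hr, sq_nonneg n]

theorem squashing_le_one (hn : 0 < n) (hr : 0 ≤ r) : squashing n r ≤ 1 :=
  div_le_one_of_le₀ (Real.sqrt_le_sqrt (cSq_le_bSq hn hr)) (Real.sqrt_nonneg _)

theorem squashing_le_div (hn : 0 < n) (hr : 0 < r) : squashing n r ≤ 2 * n / r := by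
  have hc : √(cSq n r) ≤ 4 * n := (Real.sqrt_le_left (by positivity)).mpr (cSq_le_sq hn hr.le)
  have hb : 2 * r ≤ √(bSq n r) :=
    (Real.le_sqrt (by positivity) (bSq_pos hn hr.le).le).mpr (sq_le_bSq hn.le hr.le)
  calc squashing n r ≤ 4 * n / (2 * r) := div_le_div₀ (by positivity) hc (by positivity) hb
    _ = 2 * n / r := by field_simp; ring

theorem tendsto_squashing_nhdsGT_zero (hn : n ≠ 0) :
    Tendsto (squashing n) (𝓝[>] 0) (𝓝 0) := by
  have hc : ContinuousAt (cSq n) 0 := by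
    have hD : ((0 : ℝ) + n) * (0 + 3 * n) ≠ 0 := by simp [hn]
    unfold cSq
    fun_prop (disch := exact hD)
  have hb : ContinuousAt (bSq n) 0 := by
    unfold bSq
    fun_prop
  have hb0 : √(bSq n 0) ≠ 0 :=
    Real.sqrt_ne_zero'.mpr (by rw [bSq]; nlinarith [sq_pos_of_ne_zero hn])
  have hcont : ContinuousAt (squashing n) 0 := hc.sqrt.div hb.sqrt hb0
  have h0 : squashing n 0 = 0 := by simp [squashing, cSq]
  simpa only [h0] using hcont.tendsto.mono_left nhdsWithin_le_nhds

theorem tendsto_squashing_atTop (hn : 0 < n) : Tendsto (squashing n) atTop (𝓝 0) := by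
  refine squeeze_zero' (Eventually.of_forall fun r => div_nonneg (Real.sqrt_nonneg _)
    (Real.sqrt_nonneg _)) ?_ (tendsto_const_nhds.div_atTop (f := fun _ => 2 * n) tendsto_id)
  filter_upwards [eventually_gt_atTop 0] with r hr
  exact squashing_le_div hn hr

end TaubBolt

/-- For the Taub-Bolt coefficients `b² = 4(r+n)(r+3n)`,
`c² = 16n² r(r+3n/2)/((r+n)(r+3n))` with `n > 0`:
(i) `(b²)' > 0` and `(c²)' > 0` on `(0,∞)`; (ii) `c/b ≤ 1` on `(0,∞)`;
(iii) `c/b → 0` as `r → 0⁺` and as `r → ∞`. -/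
theorem stmt_7 (n : ℝ) (hn : 0 < n) :
    let b2 : ℝ → ℝ := fun r => 4*(r + n)*(r + 3*n)
    let c2 : ℝ → ℝ := fun r => 16*n^2*(r*(r + 3*n/2))/((r + n)*(r + 3*n))
    (∀ r > 0, 0 < deriv b2 r ∧ 0 < deriv c2 r) ∧
    (∀ r > 0, Real.sqrt (c2 r) / Real.sqrt (b2 r) ≤ 1) ∧
    Filter.Tendsto (fun r => Real.sqrt (c2 r) / Real.sqrt (b2 r))
      (nhdsWithin 0 (Set.Ioi 0)) (nhds 0) ∧
    Filter.Tendsto (fun r => Real.sqrt (c2 r) / Real.sqrt (b2 r))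
      Filter.atTop (nhds 0) :=
  ⟨fun _ hr => ⟨TaubBolt.deriv_bSq_pos hn hr.le, TaubBolt.deriv_cSq_pos hn hr.le⟩,
    fun _ hr => TaubBolt.squashing_le_one hn hr.le, TaubBolt.tendsto_squashing_nhdsGT_zero hn.ne',
    TaubBolt.tendsto_squashing_atTop hn⟩
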